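/- Let π = (p_1,...,p_n) be a sequence of distinct keys avoiding the pattern (2,3,1) (i.e., there are no indices i < j < k with p_k < p_i < p_j). Let T_0 = BST(π) with all nodes initially untouched, and for 1 ≤ i ≤ n form T_i from T_{i−1} by marking the node with key p_i as touched and then splaying it. Then for every i with 1 ≤ i ≤ n, every sub-root of T_i (untouched node whose parent in T_i is touched) has left-depth at most 1 in T_i. -/

import Mathlib

/-- Binary trees with keys at internal nodes. -/
inductive BT (α : Type) where
  | leaf : BT α
  | node : BT α → α → BT α → BT α
deriving DecidableEq

namespace BT

variable {α : Type} [LinearOrder α]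

/-- The list of keys of a tree, in symmetric (inorder) order. -/
def keys : BT α → List α
  | leaf => []
  | node l v r => keys l ++ v :: keys r

/-- The number of nodes of a tree. -/
def size : BT α → ℕ
  | leaf => 0
  | node l _ r => size l + size r + 1

/-- The symmetric-order (binary search tree) property. -/
def IsBST : BT α → Prop
  | leaf => True
  | node l v r => (∀ x ∈ l.keys, x < v) ∧ (∀ x ∈ r.keys, v < x) ∧ l.IsBST ∧ r.IsBST

/-- Preorder of a binary tree: root, then left subtree, then right subtree. -/
def preorder : BT α → List α
  | leaf => []
  | node l v r => v :: (preorder l ++ preorder r)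

/-- Postorder of a binary tree: left subtree, right subtree, then root. -/
def postorder : BT α → List α
  | leaf => []
  | node l v r => postorder l ++ postorder r ++ [v]

/-- Reversed preorder: root, then right subtree, then left subtree
(the preorder of the mirror image). -/
def revPreorder : BT α → List α
  | leaf => []
  | node l v r => v :: (revPreorder r ++ revPreorder l)

/-- Standard leaf insertion into a binary search tree. -/
def insertKey : BT α → α → BT α
  | leaf, x => node leaf x leaf
  | node l v r, x =>
    if x < v then node (insertKey l x) v r
    else if v < x then node l v (insertKey r x)
    else node l v r

/-- The depth (number of edges from the root) of the node with key `x`,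
located by binary search. -/
def depthOf : BT α → α → ℕ
  | leaf, _ => 0
  | node l v r, x =>
    if x < v then depthOf l x + 1
    else if v < x then depthOf r x + 1
    else 0

/-- The search path to the key `x`: `false` records a step to a left child,
`true` a step to a right child. -/
def pathTo : BT α → α → List Bool
  | leaf, _ => []
  | node l v r, x =>
    if x < v then false :: pathTo l x
    else if v < x then true :: pathTo r x
    else []

/-- The left-depth of the node with key `x`: the number of left-child edges
on the path from the root to it. -/
def leftDepthKey : BT α → α → ℕ
  | leaf, _ => 0
  | node l v r, x =>
    if x < v then leftDepthKey l x + 1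
    else if v < x then leftDepthKey r x
    else 0

/-- The subtree rooted at the node with key `x` (empty if `x` is absent). -/
def subtreeAt : BT α → α → BT α
  | leaf, _ => leaf
  | node l v r, x =>
    if x < v then subtreeAt l x
    else if v < x then subtreeAt r x
    else node l v r

/-- The key at the root, if any. -/
def rootKey : BT α → Option α
  | leaf => none
  | node _ v _ => some v

/-- The key of the parent of the node with key `x`, if any. -/
def parentKey : BT α → α → Option α
  | leaf, _ => none
  | node l v r, x =>
    if x < v then (if l.rootKey = some x then some v else l.parentKey x)
    else if v < x then (if r.rootKey = some x then some v else r.parentKey x)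
    else none

/-- A step of the context (zipper) describing the search path from the root
to the current subtree: `inL v r` means the current subtree is the left child
of a node with key `v` and right subtree `r`; `inR l v` means it is the right
child of a node with key `v` and left subtree `l`. -/
inductive Ctx (α : Type) where
  | inL : α → BT α → Ctx α
  | inR : BT α → α → Ctx α

/-- Descend along the search path for `x`, recording the context.
The head of the returned list corresponds to the immediate parent. -/
def descend : BT α → α → List (Ctx α) → List (Ctx α) × BT α
  | leaf, _, acc => (acc, leaf)
  | node l v r, x, acc =>
    if x < v then descend l x (Ctx.inL v r :: acc)
    else if v < x then descend r x (Ctx.inR l v :: acc)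
    else (acc, node l v r)

/-- Reattach a subtree into its context, with no rotations. -/
def rebuild : BT α → List (Ctx α) → BT α
  | t, [] => t
  | t, Ctx.inL v r :: cs => rebuild (node t v r) cs
  | t, Ctx.inR l v :: cs => rebuild (node l v t) cs

/-- Bottom-up splay steps: repeatedly apply zig / zig-zig / zig-zag steps to
the current subtree (rooted at the node being splayed) until the context is
exhausted. -/
def splayLoop : BT α → List (Ctx α) → BT α
  | t, [] => t
  | node a x b, [Ctx.inL v r] => node a x (node b v r)          -- zig
  | node a x b, [Ctx.inR l v] => node (node l v a) x b          -- zig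
  | node a x b, Ctx.inL p pr :: Ctx.inL g gr :: cs =>           -- zig-zig
      splayLoop (node a x (node b p (node pr g gr))) cs
  | node a x b, Ctx.inL p pr :: Ctx.inR gl g :: cs =>           -- zig-zag
      splayLoop (node (node gl g a) x (node b p pr)) cs
  | node a x b, Ctx.inR pl p :: Ctx.inR gl g :: cs =>           -- zig-zig
      splayLoop (node (node (node gl g pl) p a) x b) cs
  | node a x b, Ctx.inR pl p :: Ctx.inL g gr :: cs =>           -- zig-zag
      splayLoop (node (node pl p a) x (node b g gr)) cs
  | leaf, cs => rebuild leaf cs   -- unreachable when the splayed key is present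

/-- Splaying the key `x`: if `x` occurs in the tree, bring its node to the
root by bottom-up splay steps; otherwise leave the tree unchanged. -/
def splay (x : α) (t : BT α) : BT α :=
  match descend t x [] with
  | (_, leaf) => t
  | (cs, found) => splayLoop found cs

/-- `α`-weight-balance in the sense of Nievergelt–Reingold:
at each node, `min(|L|,|R|) + 1 ≥ α * (|x| + 1)`. -/
def WeightBalanced (a : ℝ) : BT α → Prop
  | leaf => True
  | node l _ r =>
      (min l.size r.size + 1 : ℝ) ≥ a * ((l.size + r.size + 1 : ℕ) + 1 : ℝ) ∧
      WeightBalanced a l ∧ WeightBalanced a r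

/-- The rank of `x` in `t`: the number of keys of `t` that are `≤ x`. -/
def rank (t : BT α) (x : α) : ℕ := (t.keys.filter (fun y => y ≤ x)).length

end BT

section Defs

variable {α : Type} [LinearOrder α]

/-- The insertion tree of a sequence: leaf-insert the keys in order. -/
def bstOf (π : List α) : BT α := π.foldl BT.insertKey BT.leaf

/-- `q` is a sub-root: a node of `t` not yet touched whose parent is touched,
where `touched` is the list of touched keys. -/
def IsSubRoot (t : BT α) (touched : List α) (q : α) : Prop :=
  q ∈ t.keys ∧ q ∉ touched ∧ ∃ p, t.parentKey q = some p ∧ p ∈ touched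

/-- π avoids the pattern (2,3,1). -/
def Avoids231 (π : List α) : Prop :=
  ¬ ∃ i j k : Fin π.length, i < j ∧ j < k ∧ π.get k < π.get i ∧ π.get i < π.get j

/-- π avoids the pattern (3,1,2). -/
def Avoids312 (π : List α) : Prop :=
  ¬ ∃ i j k : Fin π.length, i < j ∧ j < k ∧ π.get j < π.get k ∧ π.get k < π.get i

/-- π avoids the pattern (2,1,3). -/
def Avoids213 (π : List α) : Prop :=
  ¬ ∃ i j k : Fin π.length, i < j ∧ j < k ∧ π.get j < π.get i ∧ π.get i < π.get k

/-- π contains a strictly decreasing subsequence of length `k`. -/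
def HasDecreasingSubseq (π : List α) (k : ℕ) : Prop :=
  ∃ s : List α, s.Sublist π ∧ s.length = k ∧ s.Chain' (· > ·)

/-- Splay the keys of a list in order, starting from `t`. -/
def splaySeq (π : List α) (t : BT α) : BT α := π.foldl (fun s x => BT.splay x s) t

/-- The cost of splaying a sequence of keys starting from `t`:
each splay costs the current depth of the requested key plus one. -/
def splayCost : BT α → List α → ℕ
  | _, [] => 0
  | t, x :: xs => (t.depthOf x + 1) + splayCost (BT.splay x t) xs

/-- The cost of insertion splaying a sequence of keys starting from `t`:
each key is leaf-inserted, then the new node is splayed, at a cost of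
its depth after insertion plus one. -/
def insertSplayCost : BT α → List α → ℕ
  | _, [] => 0
  | t, x :: xs =>
    ((t.insertKey x).depthOf x + 1) + insertSplayCost (BT.splay x (t.insertKey x)) xs

/-- `DF rk xs` = Σ_{i≥2} log₂(|rk(x_i) − rk(x_{i−1})| + 1). -/
noncomputable def DF (rk : α → ℕ) (xs : List α) : ℝ :=
  ((xs.zip xs.tail).map
    (fun p => Real.logb 2 (|(rk p.2 : ℝ) - (rk p.1 : ℝ)| + 1))).sum

/-- The rank of `x` within the sequence `σ` itself. -/
def rankIn (σ : List α) (x : α) : ℕ := (σ.filter (fun y => y ≤ x)).length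

/-- The dynamic-finger sum of a sequence, with ranks computed in the
sequence itself. -/
noncomputable def DFseq (σ : List α) : ℝ := DF (rankIn σ) σ

end Defs

/-!
The invariant: every untouched key still carries the subtree it has in BST(π), and every
sub-root has left-depth at most 1. Since BST(π) puts descendants after their ancestors in π,
all proper ancestors of the next key `x` are touched, so `x` is the root or a sub-root and its
search path has at most one left edge. Splaying along such a path (zig-zigs along right edges
around at most one zig-zag) moves whole the two subtrees of `x` and, if the left edge leaves `w`,
the right subtree of `w`; their roots end at left-depth at most 1 and no deeper than before, so
the sub-roots inside them stay shallow. Avoiding (2,3,1) is what puts every untouched key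
`q < x` into the left subtree of `x`: a key `z` inserted before `x` with `q < z < x` would form
the pattern `z x q`.
-/

namespace BT

section Shapes

variable {α : Type}

theorem mem_keys_node {l r : BT α} {v q : α} :
    q ∈ (node l v r).keys ↔ q ∈ l.keys ∨ q = v ∨ q ∈ r.keys := by
  simp [keys]

theorem mem_keys_of_rootKey_eq {t : BT α} {q : α} (h : t.rootKey = some q) : q ∈ t.keys := by
  cases t with
  | leaf => simp [rootKey] at h
  | node l v r => simp only [rootKey, Option.some.injEq] at h; simp [keys, h]

theorem keys_rebuild_congr {t t' : BT α} (h : t'.keys = t.keys) :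
    ∀ cs : List (Ctx α), (rebuild t' cs).keys = (rebuild t cs).keys
  | [] => h
  | Ctx.inL v r :: cs => keys_rebuild_congr (t := node t v r) (by simp [keys, h]) cs
  | Ctx.inR l v :: cs => keys_rebuild_congr (t := node l v t) (by simp [keys, h]) cs

theorem keys_splayLoop (t : BT α) (cs : List (Ctx α)) :
    (splayLoop t cs).keys = (rebuild t cs).keys := by
  induction t, cs using splayLoop.induct with
  | case1 t => cases t <;> rfl
  | case2 | case3 => simp [splayLoop, rebuild, keys]
  | case4 _ _ _ _ _ _ _ cs ih | case5 _ _ _ _ _ _ _ cs ih | case6 _ _ _ _ _ _ _ cs ih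
  | case7 _ _ _ _ _ _ _ cs ih =>
    rw [splayLoop, ih]
    exact keys_rebuild_congr (by simp [keys]) cs
  | case8 cs hne => rw [splayLoop.eq_8 cs hne]

inductive OnRightSpine (A : BT α) : BT α → Prop
  | refl : OnRightSpine A A
  | step (l : BT α) (v : α) {R : BT α} : OnRightSpine A R → OnRightSpine A (node l v R)

theorem OnRightSpine.trans {A B L : BT α} (h₁ : OnRightSpine A B) (h₂ : OnRightSpine B L) :
    OnRightSpine A L := by
  induction h₂ with
  | refl => exact h₁
  | step l v _ ih => exact ih.step l v

theorem OnRightSpine.mem_keys {A L : BT α} (h : OnRightSpine A L) {q : α} (hq : q ∈ A.keys) :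
    q ∈ L.keys := by
  induction h with
  | refl => exact hq
  | step l v _ ih => exact mem_keys_node.2 (Or.inr (Or.inr ih))

theorem splayLoop_inR (x : α) : ∀ (us : List (BT α × α)) (a b : BT α),
    ∃ L, splayLoop (node a x b) (us.map (Function.uncurry Ctx.inR)) = node L x b ∧
      OnRightSpine a L
  | [], a, _ => ⟨a, rfl, .refl⟩
  | [(l, v)], a, _ => ⟨node l v a, rfl, .step l v .refl⟩
  | (pl, p) :: (gl, g) :: us, a, b => by
    obtain ⟨L, hL, hs⟩ := splayLoop_inR x us (node (node gl g pl) p a) b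
    exact ⟨L, hL, (OnRightSpine.step _ p .refl).trans hs⟩

theorem splayLoop_inR_inL (x w : α) (Wr : BT α) : ∀ (ws us : List (BT α × α)) (a b : BT α),
    ∃ L, splayLoop (node a x b) (ws.map (Function.uncurry Ctx.inR) ++
        Ctx.inL w Wr :: us.map (Function.uncurry Ctx.inR)) = node L x (node b w Wr) ∧
      OnRightSpine a L
  | [], [], a, _ => ⟨a, rfl, .refl⟩
  | [], (gl, g) :: us, a, b => by
    obtain ⟨L, hL, hs⟩ := splayLoop_inR x us (node gl g a) (node b w Wr)
    exact ⟨L, hL, (OnRightSpine.step gl g .refl).trans hs⟩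
  | [(pl, p)], us, a, b => by
    obtain ⟨L, hL, hs⟩ := splayLoop_inR x us (node pl p a) (node b w Wr)
    exact ⟨L, hL, (OnRightSpine.step pl p .refl).trans hs⟩
  | (pl, p) :: (gl, g) :: ws, us, a, b => by
    obtain ⟨L, hL, hs⟩ := splayLoop_inR_inL x w Wr ws us (node (node gl g pl) p a) b
    exact ⟨L, hL, (OnRightSpine.step _ p .refl).trans hs⟩

end Shapes

variable {α : Type} [LinearOrder α]

section Navigation

variable {l r : BT α} {v q : α}

theorem subtreeAt_node_of_lt (h : q < v) : (node l v r).subtreeAt q = l.subtreeAt q := by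
  simp [subtreeAt, h]

theorem subtreeAt_node_of_gt (h : v < q) : (node l v r).subtreeAt q = r.subtreeAt q := by
  simp [subtreeAt, h, h.not_gt]

@[simp] theorem subtreeAt_node_self : (node l v r).subtreeAt v = node l v r := by
  simp [subtreeAt]

theorem leftDepthKey_node_of_lt (h : q < v) :
    (node l v r).leftDepthKey q = l.leftDepthKey q + 1 := by
  simp [leftDepthKey, h]

theorem leftDepthKey_node_of_gt (h : v < q) : (node l v r).leftDepthKey q = r.leftDepthKey q := by
  simp [leftDepthKey, h, h.not_gt]

@[simp] theorem leftDepthKey_node_self : (node l v r).leftDepthKey v = 0 := by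
  simp [leftDepthKey]

theorem parentKey_node_of_lt (h : q < v) :
    (node l v r).parentKey q = if l.rootKey = some q then some v else l.parentKey q := by
  simp [parentKey, h]

theorem parentKey_node_of_gt (h : v < q) :
    (node l v r).parentKey q = if r.rootKey = some q then some v else r.parentKey q := by
  simp [parentKey, h, h.not_gt]

@[simp] theorem parentKey_node_self : (node l v r).parentKey v = none := by
  simp [parentKey]

end Navigation

section Descend

variable {l r : BT α} {v x : α} (acc : List (Ctx α))

theorem descend_node_of_lt (h : x < v) :
    descend (node l v r) x acc = descend l x (Ctx.inL v r :: acc) := by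
  simp [descend, h]

theorem descend_node_of_gt (h : v < x) :
    descend (node l v r) x acc = descend r x (Ctx.inR l v :: acc) := by
  simp [descend, h, h.not_gt]

@[simp] theorem descend_node_self : descend (node l v r) v acc = (acc, node l v r) := by
  simp [descend]

end Descend

theorem mem_keys_left_of_lt {l r : BT α} {v q : α} (hb : (node l v r).IsBST)
    (hq : q ∈ (node l v r).keys) (h : q < v) : q ∈ l.keys := by
  rcases mem_keys_node.1 hq with hq | rfl | hq
  · exact hq
  · exact absurd h (lt_irrefl _)
  · exact absurd (hb.2.1 q hq) h.not_gt

theorem mem_keys_right_of_gt {l r : BT α} {v q : α} (hb : (node l v r).IsBST)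
    (hq : q ∈ (node l v r).keys) (h : v < q) : q ∈ r.keys := by
  rcases mem_keys_node.1 hq with hq | rfl | hq
  · exact absurd (hb.1 q hq) h.not_gt
  · exact absurd h (lt_irrefl _)
  · exact hq

theorem isBST_iff_pairwise_keys {t : BT α} : t.IsBST ↔ t.keys.Pairwise (· < ·) := by
  induction t with
  | leaf => simp [IsBST, keys]
  | node l v r ihl ihr =>
    simp only [IsBST, keys, ihl, ihr, List.pairwise_append, List.pairwise_cons, List.mem_cons]
    constructor
    · rintro ⟨hl, hr, hpl, hpr⟩
      exact ⟨hpl, ⟨hr, hpr⟩,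
        fun a ha b hb => hb.elim (· ▸ hl a ha) (lt_trans (hl a ha) ∘ hr b)⟩
    · rintro ⟨hpl, ⟨hr, hpr⟩, hlr⟩
      exact ⟨fun a ha => hlr a ha v (Or.inl rfl), hr, hpl, hpr⟩

theorem mem_keys_of_mem_keys_subtreeAt {t : BT α} {c q : α} (h : q ∈ (t.subtreeAt c).keys) :
    q ∈ t.keys := by
  induction t with
  | leaf => simpa [subtreeAt] using h
  | node l v r ihl ihr =>
    rcases lt_trichotomy c v with hc | rfl | hc
    · rw [subtreeAt_node_of_lt hc] at h
      exact mem_keys_node.2 (Or.inl (ihl h))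
    · rwa [subtreeAt_node_self] at h
    · rw [subtreeAt_node_of_gt hc] at h
      exact mem_keys_node.2 (Or.inr (Or.inr (ihr h)))

theorem subtreeAt_eq_node_of_mem {t : BT α} (hb : t.IsBST) {x : α} (hx : x ∈ t.keys) :
    ∃ l r, t.subtreeAt x = node l x r := by
  induction t with
  | leaf => simp [keys] at hx
  | node l v r ihl ihr =>
    obtain ⟨hl, hr, hbl, hbr⟩ := hb
    rcases mem_keys_node.1 hx with h | rfl | h
    · rw [subtreeAt_node_of_lt (hl _ h)]; exact ihl hbl h
    · exact ⟨l, r, subtreeAt_node_self⟩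
    · rw [subtreeAt_node_of_gt (hr _ h)]; exact ihr hbr h

theorem isBST_subtreeAt {t : BT α} (hb : t.IsBST) (c : α) : (t.subtreeAt c).IsBST := by
  induction t with
  | leaf => trivial
  | node l v r ihl ihr =>
    rcases lt_trichotomy c v with hc | rfl | hc
    · rw [subtreeAt_node_of_lt hc]; exact ihl hb.2.2.1
    · rwa [subtreeAt_node_self]
    · rw [subtreeAt_node_of_gt hc]; exact ihr hb.2.2.2

theorem subtreeAt_subtreeAt {t : BT α} (hb : t.IsBST) {c q : α}
    (hq : q ∈ (t.subtreeAt c).keys) : (t.subtreeAt c).subtreeAt q = t.subtreeAt q := by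
  induction t with
  | leaf => rfl
  | node l v r ihl ihr =>
    obtain ⟨hl, hr, hbl, hbr⟩ := hb
    rcases lt_trichotomy c v with hc | rfl | hc
    · rw [subtreeAt_node_of_lt hc] at hq ⊢
      rw [subtreeAt_node_of_lt (hl _ (mem_keys_of_mem_keys_subtreeAt hq))]
      exact ihl hbl hq
    · rw [subtreeAt_node_self]
    · rw [subtreeAt_node_of_gt hc] at hq ⊢
      rw [subtreeAt_node_of_gt (hr _ (mem_keys_of_mem_keys_subtreeAt hq))]
      exact ihr hbr hq

theorem leftDepthKey_eq_add_leftDepthKey_subtreeAt {t : BT α} (hb : t.IsBST) {c q : α}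
    (hq : q ∈ (t.subtreeAt c).keys) :
    t.leftDepthKey q = t.leftDepthKey c + (t.subtreeAt c).leftDepthKey q := by
  induction t with
  | leaf => rfl
  | node l v r ihl ihr =>
    obtain ⟨hl, hr, hbl, hbr⟩ := hb
    rcases lt_trichotomy c v with hc | rfl | hc
    · rw [subtreeAt_node_of_lt hc] at hq ⊢
      rw [leftDepthKey_node_of_lt hc,
        leftDepthKey_node_of_lt (hl _ (mem_keys_of_mem_keys_subtreeAt hq)), ihl hbl hq]
      omega
    · simp
    · rw [subtreeAt_node_of_gt hc] at hq ⊢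
      rw [leftDepthKey_node_of_gt hc,
        leftDepthKey_node_of_gt (hr _ (mem_keys_of_mem_keys_subtreeAt hq)), ihr hbr hq]

theorem leftDepthKey_eq_zero_of_rootKey_eq {t : BT α} {q : α} (h : t.rootKey = some q) :
    t.leftDepthKey q = 0 := by
  cases t with
  | leaf => simp [rootKey] at h
  | node l v r => simp only [rootKey, Option.some.injEq] at h; simp [h]

theorem eq_of_rootKey_eq_of_mem_keys_subtreeAt {t : BT α} (hb : t.IsBST) {c q : α}
    (hr : t.rootKey = some q) (hq : q ∈ (t.subtreeAt c).keys) : c = q := by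
  cases t with
  | leaf => simp [rootKey] at hr
  | node l v r =>
    simp only [rootKey, Option.some.injEq] at hr
    subst hr
    rcases lt_trichotomy c v with hc | rfl | hc
    · rw [subtreeAt_node_of_lt hc] at hq
      exact absurd (hb.1 _ (mem_keys_of_mem_keys_subtreeAt hq)) (lt_irrefl _)
    · rfl
    · rw [subtreeAt_node_of_gt hc] at hq
      exact absurd (hb.2.1 _ (mem_keys_of_mem_keys_subtreeAt hq)) (lt_irrefl _)

theorem parentKey_subtreeAt {t : BT α} (hb : t.IsBST) {c q : α}
    (hq : q ∈ (t.subtreeAt c).keys) (hqc : q ≠ c) :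
    (t.subtreeAt c).parentKey q = t.parentKey q := by
  induction t with
  | leaf => rfl
  | node l v r ihl ihr =>
    obtain ⟨hl, hr, hbl, hbr⟩ := hb
    rcases lt_trichotomy c v with hc | rfl | hc
    · rw [subtreeAt_node_of_lt hc] at hq ⊢
      have hroot : l.rootKey ≠ some q := fun h =>
        hqc (eq_of_rootKey_eq_of_mem_keys_subtreeAt hbl h hq).symm
      rw [parentKey_node_of_lt (hl _ (mem_keys_of_mem_keys_subtreeAt hq)), if_neg hroot]
      exact ihl hbl hq
    · rw [subtreeAt_node_self]
    · rw [subtreeAt_node_of_gt hc] at hq ⊢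
      have hroot : r.rootKey ≠ some q := fun h =>
        hqc (eq_of_rootKey_eq_of_mem_keys_subtreeAt hbr h hq).symm
      rw [parentKey_node_of_gt (hr _ (mem_keys_of_mem_keys_subtreeAt hq)), if_neg hroot]
      exact ihr hbr hq

theorem mem_keys_of_parentKey_eq_some {t : BT α} {p q : α} (h : t.parentKey q = some p) :
    p ∈ t.keys := by
  induction t with
  | leaf => simp [parentKey] at h
  | node l v r ihl ihr =>
    rcases lt_trichotomy q v with hc | rfl | hc
    · rw [parentKey_node_of_lt hc] at h
      split_ifs at h
      · simp only [Option.some.injEq] at h; exact mem_keys_node.2 (Or.inr (Or.inl h.symm))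
      · exact mem_keys_node.2 (Or.inl (ihl h))
    · simp at h
    · rw [parentKey_node_of_gt hc] at h
      split_ifs at h
      · simp only [Option.some.injEq] at h; exact mem_keys_node.2 (Or.inr (Or.inl h.symm))
      · exact mem_keys_node.2 (Or.inr (Or.inr (ihr h)))

theorem ne_of_parentKey_eq_some {t : BT α} {p q : α} (h : t.parentKey q = some p) : p ≠ q := by
  induction t with
  | leaf => simp [parentKey] at h
  | node l v r ihl ihr =>
    rcases lt_trichotomy q v with hc | rfl | hc
    · rw [parentKey_node_of_lt hc] at h
      split_ifs at h
      · simp only [Option.some.injEq] at h; exact h ▸ hc.ne'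
      · exact ihl h
    · simp at h
    · rw [parentKey_node_of_gt hc] at h
      split_ifs at h
      · simp only [Option.some.injEq] at h; exact h ▸ hc.ne
      · exact ihr h

theorem mem_keys_subtreeAt_of_parentKey_eq_some {t : BT α} (hb : t.IsBST) {p q : α}
    (h : t.parentKey q = some p) : q ∈ (t.subtreeAt p).keys := by
  induction t with
  | leaf => simp [parentKey] at h
  | node l v r ihl ihr =>
    obtain ⟨hl, hr, hbl, hbr⟩ := hb
    rcases lt_trichotomy q v with hc | rfl | hc
    · rw [parentKey_node_of_lt hc] at h
      split_ifs at h with hroot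
      · simp only [Option.some.injEq] at h
        subst h
        simp [keys, mem_keys_of_rootKey_eq hroot]
      · rw [subtreeAt_node_of_lt (hl _ (mem_keys_of_parentKey_eq_some h))]
        exact ihl hbl h
    · simp at h
    · rw [parentKey_node_of_gt hc] at h
      split_ifs at h with hroot
      · simp only [Option.some.injEq] at h
        subst h
        simp [keys, mem_keys_of_rootKey_eq hroot]
      · rw [subtreeAt_node_of_gt (hr _ (mem_keys_of_parentKey_eq_some h))]
        exact ihr hbr h

theorem exists_parentKey_eq_some {t : BT α} (hb : t.IsBST) {q : α} (hq : q ∈ t.keys)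
    (hr : t.rootKey ≠ some q) : ∃ p, t.parentKey q = some p := by
  induction t with
  | leaf => simp [keys] at hq
  | node l v r ihl ihr =>
    obtain ⟨hl, hr', hbl, hbr⟩ := hb
    rcases mem_keys_node.1 hq with h | rfl | h
    · rw [parentKey_node_of_lt (hl _ h)]
      by_cases hlr : l.rootKey = some q
      · exact ⟨v, if_pos hlr⟩
      · rw [if_neg hlr]; exact ihl hbl h hlr
    · simp [rootKey] at hr
    · rw [parentKey_node_of_gt (hr' _ h)]
      by_cases hrr : r.rootKey = some q
      · exact ⟨v, if_pos hrr⟩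
      · rw [if_neg hrr]; exact ihr hbr h hrr

theorem subtreeAt_left_child {t l₁ r₁ r : BT α} (hb : t.IsBST) {a c : α}
    (h : t.subtreeAt c = node (node l₁ a r₁) c r) :
    t.subtreeAt a = node l₁ a r₁ ∧ t.leftDepthKey a = t.leftDepthKey c + 1 := by
  have ha : a ∈ (t.subtreeAt c).keys := by simp [h, keys]
  have hac : a < c := (h ▸ isBST_subtreeAt hb c).1 a (by simp [keys])
  refine ⟨?_, ?_⟩
  · rw [← subtreeAt_subtreeAt hb ha, h, subtreeAt_node_of_lt hac, subtreeAt_node_self]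
  · rw [leftDepthKey_eq_add_leftDepthKey_subtreeAt hb ha, h, leftDepthKey_node_of_lt hac,
      leftDepthKey_node_self]

theorem subtreeAt_right_child {t l l₁ r₁ : BT α} (hb : t.IsBST) {b c : α}
    (h : t.subtreeAt c = node l c (node l₁ b r₁)) :
    t.subtreeAt b = node l₁ b r₁ ∧ t.leftDepthKey b = t.leftDepthKey c := by
  have hb' : b ∈ (t.subtreeAt c).keys := by simp [h, keys]
  have hcb : c < b := (h ▸ isBST_subtreeAt hb c).2.1 b (by simp [keys])
  refine ⟨?_, ?_⟩
  · rw [← subtreeAt_subtreeAt hb hb', h, subtreeAt_node_of_gt hcb, subtreeAt_node_self]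
  · rw [leftDepthKey_eq_add_leftDepthKey_subtreeAt hb hb', h, leftDepthKey_node_of_gt hcb,
      leftDepthKey_node_self, Nat.add_zero]

theorem OnRightSpine.subtreeAt_eq {A L : BT α} (h : OnRightSpine A L) (hb : L.IsBST) {q : α}
    (hq : q ∈ A.keys) :
    L.subtreeAt q = A.subtreeAt q := by
  induction h with
  | refl => rfl
  | step l v h ih => rw [subtreeAt_node_of_gt (hb.2.1 _ (h.mem_keys hq))]; exact ih hb.2.2.2

theorem OnRightSpine.leftDepthKey_eq {A L : BT α} (h : OnRightSpine A L) (hb : L.IsBST) {q : α}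
    (hq : q ∈ A.keys) :
    L.leftDepthKey q = A.leftDepthKey q := by
  induction h with
  | refl => rfl
  | step l v h ih => rw [leftDepthKey_node_of_gt (hb.2.1 _ (h.mem_keys hq))]; exact ih hb.2.2.2

theorem rebuild_descend (t : BT α) (x : α) (acc : List (Ctx α)) :
    rebuild (descend t x acc).2 (descend t x acc).1 = rebuild t acc := by
  induction t generalizing acc with
  | leaf => rfl
  | node l v r ihl ihr =>
    rcases lt_trichotomy x v with hc | rfl | hc
    · rw [descend_node_of_lt _ hc]; exact ihl _
    · rw [descend_node_self]
    · rw [descend_node_of_gt _ hc]; exact ihr _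

theorem keys_splay (x : α) (t : BT α) : (splay x t).keys = t.keys := by
  have h := rebuild_descend t x []
  unfold splay
  rcases hd : descend t x [] with ⟨cs, _ | ⟨A, y, B⟩⟩
  · rfl
  · rw [hd] at h
    rw [keys_splayLoop, h]
    rfl

theorem isBST_splay {t : BT α} (hb : t.IsBST) (x : α) : (splay x t).IsBST := by
  rwa [isBST_iff_pairwise_keys, keys_splay, ← isBST_iff_pairwise_keys]

theorem descend_of_leftDepthKey_eq_zero {x : α} : ∀ (t : BT α) (acc : List (Ctx α)),
    t.leftDepthKey x = 0 →
      ∃ us : List (BT α × α),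
        descend t x acc = (us.map (Function.uncurry Ctx.inR) ++ acc, t.subtreeAt x)
  | leaf, acc, _ => ⟨[], rfl⟩
  | node l v r, acc, hld => by
    rcases lt_trichotomy x v with hc | rfl | hc
    · simp [leftDepthKey_node_of_lt hc] at hld
    · exact ⟨[], by simp⟩
    · rw [leftDepthKey_node_of_gt hc] at hld
      obtain ⟨us, hus⟩ := descend_of_leftDepthKey_eq_zero r (Ctx.inR l v :: acc) hld
      exact ⟨us ++ [(l, v)], by simp [descend_node_of_gt _ hc, hus, subtreeAt_node_of_gt hc]⟩

theorem descend_of_leftDepthKey_eq_one {x : α} : ∀ (t : BT α) (acc : List (Ctx α)),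
    t.leftDepthKey x = 1 →
      ∃ (ws : List (BT α × α)) (w : α) (Wl Wr : BT α) (us : List (BT α × α)),
        descend t x acc = ((ws.map (Function.uncurry Ctx.inR) ++
          Ctx.inL w Wr :: us.map (Function.uncurry Ctx.inR)) ++ acc, t.subtreeAt x) ∧
        x < w ∧ t.subtreeAt w = node Wl w Wr ∧ Wl.subtreeAt x = t.subtreeAt x
  | leaf, acc, hld => by simp [leftDepthKey] at hld
  | node l v r, acc, hld => by
    rcases lt_trichotomy x v with hc | rfl | hc
    · rw [leftDepthKey_node_of_lt hc, Nat.add_eq_right] at hld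
      obtain ⟨us, hus⟩ := descend_of_leftDepthKey_eq_zero l (Ctx.inL v r :: acc) hld
      exact ⟨us, v, l, r, [], by simp [descend_node_of_lt _ hc, hus, subtreeAt_node_of_lt hc],
        hc, subtreeAt_node_self, (subtreeAt_node_of_lt hc).symm⟩
    · simp at hld
    · rw [leftDepthKey_node_of_gt hc] at hld
      obtain ⟨ws, w, Wl, Wr, us, hus, hxw, hw, hWl⟩ :=
        descend_of_leftDepthKey_eq_one r (Ctx.inR l v :: acc) hld
      exact ⟨ws, w, Wl, Wr, us ++ [(l, v)],
        by simp [descend_node_of_gt _ hc, hus, subtreeAt_node_of_gt hc], hxw,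
        by rw [subtreeAt_node_of_gt (hc.trans hxw), hw], by rw [subtreeAt_node_of_gt hc, hWl]⟩

theorem splay_eq_of_leftDepthKey_eq_zero {t A B : BT α} {x : α}
    (hAB : t.subtreeAt x = node A x B) (hld : t.leftDepthKey x = 0) :
    ∃ L, splay x t = node L x B ∧ OnRightSpine A L := by
  obtain ⟨us, hd⟩ := descend_of_leftDepthKey_eq_zero t [] hld
  rw [List.append_nil, hAB] at hd
  unfold splay
  rw [hd]
  exact splayLoop_inR x us A B

theorem splay_eq_of_leftDepthKey_eq_one {t A B : BT α} {x : α}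
    (hAB : t.subtreeAt x = node A x B) (hld : t.leftDepthKey x = 1) :
    ∃ L w Wl Wr, splay x t = node L x (node B w Wr) ∧ OnRightSpine A L ∧
      t.subtreeAt w = node Wl w Wr ∧ x ∈ Wl.keys := by
  obtain ⟨ws, w, Wl, Wr, us, hd, -, hw, hWl⟩ := descend_of_leftDepthKey_eq_one t [] hld
  rw [List.append_nil, hAB] at hd
  obtain ⟨L, hL, hs⟩ := splayLoop_inR_inL x w Wr ws us A B
  refine ⟨L, w, Wl, Wr, ?_, hs, hw, mem_keys_of_mem_keys_subtreeAt (c := x) ?_⟩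
  · unfold splay
    rw [hd]
    exact hL
  · simp [hWl, hAB, keys]

end BT

section InsertionTree

open BT

variable {α : Type} [LinearOrder α]

theorem foldl_insertKey_node (l r : BT α) (a : α) (xs : List α) :
    xs.foldl insertKey (node l a r) =
      node ((xs.filter (· < a)).foldl insertKey l) a ((xs.filter (a < ·)).foldl insertKey r) := by
  induction xs generalizing l r with
  | nil => rfl
  | cons y xs ih =>
    rcases lt_trichotomy y a with h | rfl | h
    · simp [insertKey, h, h.not_gt, ih]
    · simp [insertKey, ih]
    · simp [insertKey, h, h.not_gt, ih]

theorem bstOf_cons (a : α) (xs : List α) :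
    bstOf (a :: xs) = node (bstOf (xs.filter (· < a))) a (bstOf (xs.filter (a < ·))) :=
  foldl_insertKey_node leaf leaf a xs

theorem mem_keys_bstOf {q : α} : ∀ {π : List α}, q ∈ (bstOf π).keys ↔ q ∈ π
  | [] => by simp [bstOf, keys]
  | a :: xs => by
    rw [bstOf_cons, mem_keys_node, mem_keys_bstOf, mem_keys_bstOf]
    simp only [List.mem_filter, decide_eq_true_eq, List.mem_cons]
    rcases lt_trichotomy q a with h | rfl | h
    · simp [h, h.not_gt, h.ne]
    · simp
    · simp [h, h.not_gt, h.ne']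
termination_by π => π.length
decreasing_by all_goals exact Nat.lt_succ_of_le (List.length_filter_le _ _)

theorem isBST_bstOf : ∀ π : List α, (bstOf π).IsBST
  | [] => trivial
  | a :: xs => by
    rw [bstOf_cons]
    refine ⟨fun q hq => ?_, fun q hq => ?_, isBST_bstOf _, isBST_bstOf _⟩
    · simpa using (List.mem_filter.1 (mem_keys_bstOf.1 hq)).2
    · simpa using (List.mem_filter.1 (mem_keys_bstOf.1 hq)).2
termination_by π => π.length
decreasing_by all_goals exact Nat.lt_succ_of_le (List.length_filter_le _ _)

theorem eq_or_sublist_of_mem_keys_subtreeAt_bstOf {q z : α} : ∀ {π : List α},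
    z ∈ ((bstOf π).subtreeAt q).keys → z = q ∨ [q, z].Sublist π
  | [], h => by simp [bstOf, subtreeAt, keys] at h
  | a :: xs, h => by
    rw [bstOf_cons] at h
    rcases lt_trichotomy q a with hqa | rfl | hqa
    · rw [subtreeAt_node_of_lt hqa] at h
      exact (eq_or_sublist_of_mem_keys_subtreeAt_bstOf h).imp_right
        fun hs => (hs.trans List.filter_sublist).cons a
    · rw [subtreeAt_node_self, ← bstOf_cons, mem_keys_bstOf, List.mem_cons] at h
      exact h.imp_right fun hz => List.cons_sublist_cons.2 (List.singleton_sublist.2 hz)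
    · rw [subtreeAt_node_of_gt hqa] at h
      exact (eq_or_sublist_of_mem_keys_subtreeAt_bstOf h).imp_right
        fun hs => (hs.trans List.filter_sublist).cons a
termination_by π => π.length
decreasing_by all_goals exact Nat.lt_succ_of_le (List.length_filter_le _ _)

theorem mem_keys_subtreeAt_bstOf {x q : α} : ∀ {pre post : List α}, q ∈ x :: post →
    (∀ z ∈ pre, (z < q ∧ z < x) ∨ (q < z ∧ x < z)) →
    q ∈ ((bstOf (pre ++ x :: post)).subtreeAt x).keys
  | [], post, hq, _ => by
    rwa [List.nil_append, bstOf_cons, subtreeAt_node_self, ← bstOf_cons, mem_keys_bstOf]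
  | a :: pre, post, hq, hpre => by
    have hpre' (p : α → Bool) :
        ∀ z ∈ pre.filter p, (z < q ∧ z < x) ∨ (q < z ∧ x < z) :=
      fun z hz => hpre z (List.mem_cons_of_mem a (List.mem_filter.1 hz).1)
    rw [List.cons_append, bstOf_cons]
    rcases hpre a List.mem_cons_self with ⟨haq, hax⟩ | ⟨hqa, hxa⟩
    · rw [subtreeAt_node_of_gt hax, List.filter_append, List.filter_cons_of_pos (by simpa)]
      refine mem_keys_subtreeAt_bstOf ?_ (hpre' _)
      rcases List.mem_cons.1 hq with rfl | hq
      · exact List.mem_cons_self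
      · exact List.mem_cons_of_mem _ (List.mem_filter.2 ⟨hq, by simpa⟩)
    · rw [subtreeAt_node_of_lt hxa, List.filter_append, List.filter_cons_of_pos (by simpa)]
      refine mem_keys_subtreeAt_bstOf ?_ (hpre' _)
      rcases List.mem_cons.1 hq with rfl | hq
      · exact List.mem_cons_self
      · exact List.mem_cons_of_mem _ (List.mem_filter.2 ⟨hq, by simpa⟩)
termination_by pre => pre.length
decreasing_by all_goals exact Nat.lt_succ_of_le (List.length_filter_le _ _)

end InsertionTree

theorem Avoids231.not_sublist {α : Type} [LinearOrder α] {π : List α} (hav : Avoids231 π)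
    {a b c : α} (hs : [b, c, a].Sublist π) (hab : a < b) (hbc : b < c) : False := by
  obtain ⟨f, hf⟩ := List.sublist_iff_exists_fin_orderEmbedding_get_eq.1 hs
  have h₀ := hf ⟨0, by simp⟩
  have h₁ := hf ⟨1, by simp⟩
  have h₂ := hf ⟨2, by simp⟩
  simp only [List.get_eq_getElem, List.getElem_cons_zero, List.getElem_cons_succ] at h₀ h₁ h₂
  refine hav ⟨f ⟨0, by simp⟩, f ⟨1, by simp⟩, f ⟨2, by simp⟩, f.strictMono (by simp),
    f.strictMono (by simp), ?_, ?_⟩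
  · simpa only [List.get_eq_getElem, ← h₀, ← h₂] using hab
  · simpa only [List.get_eq_getElem, ← h₀, ← h₁] using hbc

theorem List.Nodup.mem_of_pair_sublist_append {α : Type} {pre rest : List α} {a b : α}
    (hnd : (pre ++ rest).Nodup) (hs : [a, b].Sublist (pre ++ rest)) (hb : b ∈ pre) :
    a ∈ pre := by
  obtain ⟨l₁, l₂, hl, h₁, h₂⟩ := List.sublist_append_iff.1 hs
  rcases l₁ with _ | ⟨c, _ | ⟨d, l₁⟩⟩
  · simp only [List.nil_append] at hl
    subst hl
    exact absurd (h₂.subset (by simp)) (List.disjoint_of_nodup_append hnd hb)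
  · simp only [List.singleton_append, List.cons.injEq] at hl
    exact hl.1 ▸ h₁.subset (by simp)
  · simp only [List.cons_append, List.cons.injEq] at hl
    exact hl.1 ▸ h₁.subset (by simp)

section SplayStep

open BT

variable {α : Type} [LinearOrder α] {t t' : BT α} {S : List α} {x c : α}

def MovedBlock (t t' : BT α) (x c : α) : Prop :=
  t'.subtreeAt c = t.subtreeAt c ∧ x ∉ (t.subtreeAt c).keys ∧
    t'.leftDepthKey c ≤ 1 ∧ t'.leftDepthKey c ≤ t.leftDepthKey c

namespace MovedBlock

theorem subtreeAt_eq (h : MovedBlock t t' x c) (ht : t.IsBST) (ht' : t'.IsBST) {q : α}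
    (hq : q ∈ (t.subtreeAt c).keys) : t'.subtreeAt q = t.subtreeAt q := by
  rw [← subtreeAt_subtreeAt ht' (h.1 ▸ hq), h.1, subtreeAt_subtreeAt ht hq]

theorem leftDepthKey_le_one (h : MovedBlock t t' x c) (ht : t.IsBST) (ht' : t'.IsBST)
    (hsub : ∀ q, IsSubRoot t S q → t.leftDepthKey q ≤ 1) {q : α}
    (hq : q ∈ (t.subtreeAt c).keys) (hqsub : IsSubRoot t' (S ++ [x]) q) :
    t'.leftDepthKey q ≤ 1 := by
  obtain ⟨hc, hx, hld, hld'⟩ := h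
  obtain ⟨-, hqS, p, hp, hpS⟩ := hqsub
  have hq' : q ∈ (t'.subtreeAt c).keys := hc ▸ hq
  rcases eq_or_ne q c with rfl | hqc
  · exact hld
  have hpc : (t.subtreeAt c).parentKey q = some p := by
    rw [← hc, parentKey_subtreeAt ht' hq' hqc, hp]
  have hpS' : p ∈ S := by
    rcases List.mem_append.1 hpS with h | h
    · exact h
    · rw [List.mem_singleton.1 h] at hpc
      exact absurd (mem_keys_of_parentKey_eq_some hpc) hx
  -- inside the block `q` keeps its parent, so it already was a sub-root of `t`
  have hold := hsub q ⟨mem_keys_of_mem_keys_subtreeAt hq, fun h => hqS (List.mem_append_left _ h),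
    p, parentKey_subtreeAt ht hq hqc ▸ hpc, hpS'⟩
  rw [leftDepthKey_eq_add_leftDepthKey_subtreeAt ht hq] at hold
  rw [leftDepthKey_eq_add_leftDepthKey_subtreeAt ht' hq', hc]
  omega

end MovedBlock

theorem movedBlock_of_onRightSpine {A₁ A₂ B L R : BT α} {a : α} (hb : t.IsBST) (hb' : t'.IsBST)
    (hAB : t.subtreeAt x = node (node A₁ a A₂) x B) (hs : t' = node L x R)
    (hL : OnRightSpine (node A₁ a A₂) L) : MovedBlock t t' x a := by
  obtain ⟨hta, hlda⟩ := subtreeAt_left_child hb hAB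
  have hbL : L.IsBST := (hs ▸ hb').2.2.1
  have hbx : (node (node A₁ a A₂) x B).IsBST := hAB ▸ isBST_subtreeAt hb x
  have hax : a < x := hbx.1 a (by simp [keys])
  have ha : a ∈ (node A₁ a A₂).keys := by simp [keys]
  have hld : t'.leftDepthKey a = 1 := by
    rw [hs, leftDepthKey_node_of_lt hax, hL.leftDepthKey_eq hbL ha, leftDepthKey_node_self]
  refine ⟨?_, ?_, hld.le, by omega⟩
  · rw [hs, subtreeAt_node_of_lt hax, hL.subtreeAt_eq hbL ha, subtreeAt_node_self, hta]
  · rw [hta]; exact fun h => lt_irrefl x (hbx.1 x h)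

theorem exists_movedBlock_of_leftDepthKey_eq_zero {A B : BT α} {q : α} (hb : t.IsBST)
    (hAB : t.subtreeAt x = node A x B) (hld : t.leftDepthKey x = 0)
    (hA : q < x → q ∈ A.keys) (hq : q ∈ (splay x t).keys) (hqx : q ≠ x) :
    ∃ c, q ∈ (t.subtreeAt c).keys ∧ MovedBlock t (splay x t) x c := by
  obtain ⟨L, hs, hL⟩ := splay_eq_of_leftDepthKey_eq_zero hAB hld
  have hb' := isBST_splay hb x
  rcases lt_or_gt_of_ne hqx with h | h
  · have hqA := hA h
    rcases A with _ | ⟨A₁, a, A₂⟩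
    · simp [keys] at hqA
    exact ⟨a, (subtreeAt_left_child hb hAB).1 ▸ hqA,
      movedBlock_of_onRightSpine hb hb' hAB hs hL⟩
  · have hqB := mem_keys_right_of_gt (hs ▸ hb') (hs ▸ hq) h
    rcases B with _ | ⟨B₁, b, B₂⟩
    · simp [keys] at hqB
    have hbx : (node A x (node B₁ b B₂)).IsBST := hAB ▸ isBST_subtreeAt hb x
    obtain ⟨htb, -⟩ := subtreeAt_right_child hb hAB
    obtain ⟨htb', hldb'⟩ := subtreeAt_right_child hb' (c := x) (by rw [hs, subtreeAt_node_self])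
    refine ⟨b, htb ▸ hqB, by rw [htb', htb], ?_, ?_, ?_⟩
    · rw [htb]; exact fun h => lt_irrefl x (hbx.2.1 x h)
    · rw [hldb', hs, leftDepthKey_node_self]; exact zero_le_one
    · rw [hldb', hs, leftDepthKey_node_self]; exact Nat.zero_le _

theorem exists_movedBlock_of_leftDepthKey_eq_one {A B : BT α} {q : α} (hb : t.IsBST)
    (hAB : t.subtreeAt x = node A x B) (hld : t.leftDepthKey x = 1)
    (hanc : ∀ a ∈ t.keys, x ∈ (t.subtreeAt a).keys → a ≠ x → a ∈ S)
    (hA : q < x → q ∈ A.keys) (hq : q ∈ (splay x t).keys) (hqS : q ∉ S) (hqx : q ≠ x) :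
    ∃ c, q ∈ (t.subtreeAt c).keys ∧ MovedBlock t (splay x t) x c := by
  obtain ⟨L, w, Wl, Wr, hs, hL, hw, hxWl⟩ := splay_eq_of_leftDepthKey_eq_one hAB hld
  have hb' := isBST_splay hb x
  rcases lt_or_gt_of_ne hqx with h | h
  · have hqA := hA h
    rcases A with _ | ⟨A₁, a, A₂⟩
    · simp [keys] at hqA
    exact ⟨a, (subtreeAt_left_child hb hAB).1 ▸ hqA,
      movedBlock_of_onRightSpine hb hb' hAB hs hL⟩
  have hbw : (node Wl w Wr).IsBST := hw ▸ isBST_subtreeAt hb w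
  have hxw : x < w := hbw.1 x hxWl
  have hwS : w ∈ S := hanc w (mem_keys_of_mem_keys_subtreeAt (c := w) (by simp [hw, keys]))
    (by simp [hw, keys, hxWl]) hxw.ne'
  obtain ⟨htw', hldw'⟩ := subtreeAt_right_child hb' (c := x) (by rw [hs, subtreeAt_node_self])
  rcases mem_keys_node.1 (mem_keys_right_of_gt (hs ▸ hb') (hs ▸ hq) h) with hqB | rfl | hqW
  · rcases B with _ | ⟨B₁, b, B₂⟩
    · simp [keys] at hqB
    have hbx : (node A x (node B₁ b B₂)).IsBST := hAB ▸ isBST_subtreeAt hb x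
    obtain ⟨htb, hldb⟩ := subtreeAt_right_child hb hAB
    obtain ⟨htb', hldb'⟩ := subtreeAt_left_child hb' htw'
    refine ⟨b, htb ▸ hqB, by rw [htb', htb], ?_, ?_, ?_⟩
    · rw [htb]; exact fun h => lt_irrefl x (hbx.2.1 x h)
    · rw [hldb', hldw', hs, leftDepthKey_node_self]
    · rw [hldb', hldw', hldb, hld, hs, leftDepthKey_node_self]
  · exact absurd hwS hqS
  · rcases Wr with _ | ⟨R₁, r, R₂⟩
    · simp [keys] at hqW
    obtain ⟨htr, -⟩ := subtreeAt_right_child hb hw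
    obtain ⟨htr', hldr'⟩ := subtreeAt_right_child hb' htw'
    refine ⟨r, htr ▸ hqW, by rw [htr', htr], ?_, ?_, ?_⟩
    · rw [htr]; exact fun h => lt_irrefl x (hxw.trans (hbw.2.1 x h))
    · rw [hldr', hldw', hs, leftDepthKey_node_self]; exact zero_le_one
    · rw [hldr', hldw', hs, leftDepthKey_node_self]; exact Nat.zero_le _

theorem leftDepthKey_le_one_of_ancestors_mem (hb : t.IsBST) (hx : x ∈ t.keys) (hxS : x ∉ S)
    (hanc : ∀ a ∈ t.keys, x ∈ (t.subtreeAt a).keys → a ≠ x → a ∈ S)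
    (hsub : ∀ q, IsSubRoot t S q → t.leftDepthKey q ≤ 1) : t.leftDepthKey x ≤ 1 := by
  by_cases hr : t.rootKey = some x
  · simp [leftDepthKey_eq_zero_of_rootKey_eq hr]
  obtain ⟨p, hp⟩ := exists_parentKey_eq_some hb hx hr
  exact hsub x ⟨hx, hxS, p, hp, hanc p (mem_keys_of_parentKey_eq_some hp)
    (mem_keys_subtreeAt_of_parentKey_eq_some hb hp) (ne_of_parentKey_eq_some hp)⟩

theorem exists_movedBlock_splay (hb : t.IsBST) (hx : x ∈ t.keys) (hxS : x ∉ S)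
    (hanc : ∀ a ∈ t.keys, x ∈ (t.subtreeAt a).keys → a ≠ x → a ∈ S)
    (hleft : ∀ q ∈ t.keys, q ∉ S → q < x → q ∈ (t.subtreeAt x).keys)
    (hsub : ∀ q, IsSubRoot t S q → t.leftDepthKey q ≤ 1)
    {q : α} (hq : q ∈ (splay x t).keys) (hqS : q ∉ S) (hqx : q ≠ x) :
    ∃ c, q ∈ (t.subtreeAt c).keys ∧ MovedBlock t (splay x t) x c := by
  obtain ⟨A, B, hAB⟩ := subtreeAt_eq_node_of_mem hb hx
  have hA (h : q < x) : q ∈ A.keys := mem_keys_left_of_lt (hAB ▸ isBST_subtreeAt hb x)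
    (hAB ▸ hleft q (keys_splay x t ▸ hq) hqS h) h
  rcases Nat.le_one_iff_eq_zero_or_eq_one.1
    (leftDepthKey_le_one_of_ancestors_mem hb hx hxS hanc hsub) with hld | hld
  · exact exists_movedBlock_of_leftDepthKey_eq_zero hb hAB hld hA hq hqx
  · exact exists_movedBlock_of_leftDepthKey_eq_one hb hAB hld hanc hA hq hqS hqx

end SplayStep

section Invariant

open BT

variable {α : Type} [LinearOrder α]

theorem splaySeq_append_singleton (pre : List α) (x : α) (t : BT α) :
    splaySeq (pre ++ [x]) t = splay x (splaySeq pre t) := by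
  simp [splaySeq]

theorem keys_splaySeq (pre : List α) (t : BT α) : (splaySeq pre t).keys = t.keys := by
  induction pre using List.reverseRecOn with
  | nil => rfl
  | append_singleton pre x ih => rw [splaySeq_append_singleton, keys_splay, ih]

theorem isBST_splaySeq {t : BT α} (hb : t.IsBST) (pre : List α) : (splaySeq pre t).IsBST := by
  rw [isBST_iff_pairwise_keys, keys_splaySeq, ← isBST_iff_pairwise_keys]
  exact hb

def SplayInvariant (T₀ t : BT α) (S : List α) : Prop :=
  (∀ q ∈ t.keys, q ∉ S → t.subtreeAt q = T₀.subtreeAt q) ∧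
    ∀ q, IsSubRoot t S q → t.leftDepthKey q ≤ 1

theorem splayInvariant_nil (T₀ : BT α) : SplayInvariant T₀ T₀ [] :=
  ⟨fun _ _ _ => rfl, fun _ ⟨_, _, _, _, h⟩ => absurd h List.not_mem_nil⟩

section Prefix

variable {pre post : List α} {x : α} {t : BT α}

theorem SplayInvariant.mem_of_ancestor (hnd : (pre ++ x :: post).Nodup)
    (h : SplayInvariant (bstOf (pre ++ x :: post)) t pre) {a : α} (ha : a ∈ t.keys)
    (hxa : x ∈ (t.subtreeAt a).keys) (hax : a ≠ x) : a ∈ pre := by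
  by_contra haS
  rw [h.1 a ha haS] at hxa
  refine (eq_or_sublist_of_mem_keys_subtreeAt_bstOf hxa).elim (fun h => hax h.symm) fun hs => ?_
  have hnd' : ((pre ++ [x]) ++ post).Nodup := by simpa using hnd
  have := hnd'.mem_of_pair_sublist_append (by simpa using hs) (by simp)
  simp [haS, hax] at this

theorem Avoids231.not_between_of_mem_prefix (hav : Avoids231 (pre ++ x :: post))
    (hnd : (pre ++ x :: post).Nodup) {q : α} (hq : q ∈ post) (hqx : q < x) :
    ∀ z ∈ pre, (z < q ∧ z < x) ∨ (q < z ∧ x < z) := by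
  intro z hz
  have hdisj := List.disjoint_of_nodup_append hnd hz
  rcases lt_trichotomy z q with hzq | rfl | hqz
  · exact Or.inl ⟨hzq, hzq.trans hqx⟩
  · exact absurd (List.mem_cons_of_mem x hq) hdisj
  refine Or.inr ⟨hqz, lt_of_not_ge fun hzx => ?_⟩
  rcases hzx.lt_or_eq with hzx | rfl
  · exact hav.not_sublist ((List.singleton_sublist.2 hz).append
      (List.cons_sublist_cons.2 (List.singleton_sublist.2 hq))) hqz hzx
  · exact hdisj List.mem_cons_self

theorem SplayInvariant.mem_keys_subtreeAt_of_lt (hnd : (pre ++ x :: post).Nodup)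
    (hav : Avoids231 (pre ++ x :: post)) (ht : ∀ q, q ∈ t.keys ↔ q ∈ pre ++ x :: post)
    (h : SplayInvariant (bstOf (pre ++ x :: post)) t pre) {q : α} (hq : q ∈ t.keys)
    (hqS : q ∉ pre) (hqx : q < x) : q ∈ (t.subtreeAt x).keys := by
  have hxS : x ∉ pre := fun h => List.disjoint_of_nodup_append hnd h List.mem_cons_self
  have hqpost : q ∈ post :=
    (List.mem_cons.1 ((List.mem_append.1 ((ht q).1 hq)).resolve_left hqS)).resolve_left hqx.ne
  rw [h.1 x ((ht x).2 (by simp)) hxS]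
  exact mem_keys_subtreeAt_bstOf (List.mem_cons_of_mem x hqpost)
    (hav.not_between_of_mem_prefix hnd hqpost hqx)

theorem SplayInvariant.step (hnd : (pre ++ x :: post).Nodup) (hav : Avoids231 (pre ++ x :: post))
    (hb : t.IsBST) (ht : ∀ q, q ∈ t.keys ↔ q ∈ pre ++ x :: post)
    (h : SplayInvariant (bstOf (pre ++ x :: post)) t pre) :
    SplayInvariant (bstOf (pre ++ x :: post)) (splay x t) (pre ++ [x]) := by
  have hx : x ∈ t.keys := (ht x).2 (by simp)
  have hxS : x ∉ pre := fun h => List.disjoint_of_nodup_append hnd h List.mem_cons_self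
  have hb' := isBST_splay hb x
  have block {q : α} (hq : q ∈ (splay x t).keys) (hqS : q ∉ pre ++ [x]) :=
    exists_movedBlock_splay hb hx hxS (fun a => h.mem_of_ancestor hnd)
      (fun q => h.mem_keys_subtreeAt_of_lt hnd hav ht) h.2 hq
      (fun h => hqS (List.mem_append_left _ h)) fun h => hqS (by simp [h])
  refine ⟨fun q hq hqS => ?_, fun q hq => ?_⟩
  · obtain ⟨c, hqc, hc⟩ := block hq hqS
    rw [hc.subtreeAt_eq hb hb' hqc]
    exact h.1 q (keys_splay x t ▸ hq) fun h => hqS (List.mem_append_left _ h)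
  · obtain ⟨c, hqc, hc⟩ := block hq.1 hq.2.1
    exact hc.leftDepthKey_le_one hb hb' h.2 hqc hq

end Prefix

theorem splayInvariant_of_append_eq {π : List α} (hnd : π.Nodup) (hav : Avoids231 π)
    (pre suf : List α) (h : pre ++ suf = π) :
    SplayInvariant (bstOf π) (splaySeq pre (bstOf π)) pre := by
  induction pre using List.reverseRecOn generalizing suf with
  | nil => exact splayInvariant_nil _
  | append_singleton pre x ih =>
    subst h
    have ih' := ih (x :: suf) (by simp)
    simp only [List.append_assoc, List.singleton_append] at hnd hav ih' ⊢
    rw [splaySeq_append_singleton]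
    exact ih'.step hnd hav (isBST_splaySeq (isBST_bstOf _) pre)
      fun q => by rw [keys_splaySeq, mem_keys_bstOf]

end Invariant

theorem subroot_leftdepth_le_one_avoids231_general {α : Type} [LinearOrder α]
    (π : List α) (hnd : π.Nodup) (hav : Avoids231 π)
    (i : ℕ) :
    ∀ q, IsSubRoot (splaySeq (π.take i) (bstOf π)) (π.take i) q →
      (splaySeq (π.take i) (bstOf π)).leftDepthKey q ≤ 1 :=
  (splayInvariant_of_append_eq hnd hav _ _ (List.take_append_drop i π)).2

/-- While insertion splaying a (2,3,1)-avoiding sequence of distinct keys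
(equivalently, splaying the keys in order starting from the insertion tree
`bstOf π`), after each splay every sub-root (untouched node with a touched
parent) has left-depth at most 1. -/
theorem subroot_leftdepth_le_one_avoids231 {α : Type} [LinearOrder α]
    (π : List α) (hnd : π.Nodup) (hav : Avoids231 π)
    (i : ℕ) (h1 : 1 ≤ i) (h2 : i ≤ π.length) :
    ∀ q, IsSubRoot (splaySeq (π.take i) (bstOf π)) (π.take i) q →
      (splaySeq (π.take i) (bstOf π)).leftDepthKey q ≤ 1 :=
  subroot_leftdepth_le_one_avoids231_general π hnd hav i
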